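/- The inversion formula for combinatorial Fibonacci polynomials: for all n, \sum_{k=0}^{\lfloor n/2 \rfloor} (-s)^k \left( \binom{n}{k} - \binom{n}{k-1} \right) f_{n-2k}(x,s) = x^n, where f_n(x,s) = F_{n+1}(x,s). -/
import Mathlib
def fibP {R : Type*} [CommRing R] (x s : R) : ℕ → R
  | 0 => 0
  | 1 => 1
  | n + 2 => x * fibP x s (n + 1) + s * fibP x s n
section Aux
variable {R : Type*} [CommRing R]
def cR (R : Type*) [CommRing R] (n k : ℕ) : R :=
  (n.choose k : R) - if k = 0 then 0 else (n.choose (k - 1) : R)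
def LL (x s : R) (n : ℕ) : R :=
  ∑ k ∈ Finset.range (n / 2 + 1),
    (-s) ^ k * cR R n k * fibP x s (n - 2 * k + 1)
lemma fibP_rec (x s : R) (n : ℕ) :
    fibP x s (n + 2) = x * fibP x s (n + 1) + s * fibP x s n := rfl
lemma fibP_zero (x s : R) : fibP x s 0 = 0 := rfl
lemma fibP_one (x s : R) : fibP x s 1 = 1 := rfl
lemma fibP_two (x s : R) : fibP x s 2 = x := by
  rw [show (2 : ℕ) = 0 + 2 from rfl, fibP_rec, fibP_one, fibP_zero]; ring
lemma cR_succ (n k : ℕ) :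
    cR R (n + 1) k = cR R n k + (if k = 0 then 0 else cR R n (k - 1)) := by
  match k with
  | 0 => simp [cR]
  | 1 => simp [cR, Nat.choose_succ_succ]
  | (k + 2) =>
    have h1 : (n + 1).choose (k + 2) = n.choose (k + 1) + n.choose (k + 2) :=
      Nat.choose_succ_succ n (k + 1)
    have h2 : (n + 1).choose (k + 1) = n.choose k + n.choose (k + 1) :=
      Nat.choose_succ_succ n k
    rw [show k + 2 - 1 = k + 1 from rfl]
    simp only [cR, if_neg (show ¬ k + 2 = 0 by omega), if_neg (show ¬ k + 1 = 0 by omega),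
      show k + 2 - 1 = k + 1 from rfl, show k + 1 - 1 = k from rfl, h1, h2, Nat.cast_add]
    ring
lemma cR_half (m : ℕ) : cR R (2 * m + 1) (m + 1) = 0 := by
  simp [cR, Nat.choose_symm_half]
lemma key_even (x s : R) (m : ℕ) : LL x s (2 * m + 2) = x * LL x s (2 * m + 1) := by
  unfold LL
  rw [show (2 * m + 2) / 2 + 1 = m + 1 + 1 by omega,
      show (2 * m + 1) / 2 + 1 = m + 1 by omega]
  have step1 : ∀ k ∈ Finset.range (m + 1 + 1),
      (-s) ^ k * cR R (2 * m + 2) k * fibP x s (2 * m + 2 - 2 * k + 1)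
      = (-s) ^ k * cR R (2 * m + 1) k * fibP x s (2 * m + 2 - 2 * k + 1)
        + (-s) ^ k * (if k = 0 then 0 else cR R (2 * m + 1) (k - 1)) *
            fibP x s (2 * m + 2 - 2 * k + 1) := by
    intro k _
    rw [show 2 * m + 2 = (2 * m + 1) + 1 from rfl, cR_succ]
    ring
  rw [Finset.sum_congr rfl step1, Finset.sum_add_distrib,
    Finset.sum_range_succ (fun k => (-s) ^ k * cR R (2 * m + 1) k *
      fibP x s (2 * m + 2 - 2 * k + 1)) (m + 1),
    Finset.sum_range_succ' (fun k => (-s) ^ k * (if k = 0 then 0 else cR R (2 * m + 1) (k - 1)) *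
      fibP x s (2 * m + 2 - 2 * k + 1)) (m + 1),
    cR_half]
  simp only [if_true, Nat.add_sub_cancel, if_neg (Nat.succ_ne_zero _), mul_zero, zero_mul,
    add_zero]
  rw [← Finset.sum_add_distrib, Finset.mul_sum]
  apply Finset.sum_congr rfl
  intro k hk
  rw [Finset.mem_range] at hk
  rw [show 2 * m + 2 - 2 * k + 1 = (2 * m - 2 * k + 1) + 2 by omega, fibP_rec,
      show 2 * m + 2 - 2 * (k + 1) + 1 = 2 * m - 2 * k + 1 by omega,
      show 2 * m + 1 - 2 * k + 1 = 2 * m - 2 * k + 1 + 1 by omega, pow_succ]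
  ring

lemma key_odd (x s : R) (m : ℕ) : LL x s (2 * m + 3) = x * LL x s (2 * m + 2) := by
  unfold LL
  rw [show (2 * m + 3) / 2 + 1 = m + 1 + 1 by omega,
      show (2 * m + 2) / 2 + 1 = m + 1 + 1 by omega]
  have step1 : ∀ k ∈ Finset.range (m + 1 + 1),
      (-s) ^ k * cR R (2 * m + 3) k * fibP x s (2 * m + 3 - 2 * k + 1)
      = (-s) ^ k * cR R (2 * m + 2) k * fibP x s (2 * m + 3 - 2 * k + 1)
        + (-s) ^ k * (if k = 0 then 0 else cR R (2 * m + 2) (k - 1)) *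
            fibP x s (2 * m + 3 - 2 * k + 1) := by
    intro k _
    rw [show 2 * m + 3 = (2 * m + 2) + 1 from rfl, cR_succ]
    ring
  rw [Finset.sum_congr rfl step1, Finset.sum_add_distrib,
    Finset.sum_range_succ (fun k => (-s) ^ k * cR R (2 * m + 2) k *
      fibP x s (2 * m + 3 - 2 * k + 1)) (m + 1),
    Finset.sum_range_succ' (fun k => (-s) ^ k * (if k = 0 then 0 else cR R (2 * m + 2) (k - 1)) *
      fibP x s (2 * m + 3 - 2 * k + 1)) (m + 1),
    Finset.sum_range_succ (fun k => (-s) ^ k * cR R (2 * m + 2) k *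
      fibP x s (2 * m + 2 - 2 * k + 1)) (m + 1)]
  simp only [if_true, Nat.add_sub_cancel, if_neg (Nat.succ_ne_zero _), mul_zero, zero_mul,
    add_zero]
  rw [show 2 * m + 3 - 2 * (m + 1) + 1 = 2 by omega,
      show 2 * m + 2 - 2 * (m + 1) + 1 = 1 by omega, fibP_two, fibP_one]
  have main : (∑ k ∈ Finset.range (m + 1),
        (-s) ^ k * cR R (2 * m + 2) k * fibP x s (2 * m + 3 - 2 * k + 1))
      + (∑ k ∈ Finset.range (m + 1),
        (-s) ^ (k + 1) * cR R (2 * m + 2) k * fibP x s (2 * m + 3 - 2 * (k + 1) + 1))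
      = x * ∑ k ∈ Finset.range (m + 1),
        (-s) ^ k * cR R (2 * m + 2) k * fibP x s (2 * m + 2 - 2 * k + 1) := by
    rw [← Finset.sum_add_distrib, Finset.mul_sum]
    apply Finset.sum_congr rfl
    intro k hk
    rw [Finset.mem_range] at hk
    rw [show 2 * m + 3 - 2 * k + 1 = (2 * m + 2 - 2 * k) + 2 by omega, fibP_rec,
        show 2 * m + 3 - 2 * (k + 1) + 1 = 2 * m + 2 - 2 * k by omega,
        show 2 * m + 2 - 2 * k + 1 = (2 * m + 2 - 2 * k) + 1 by omega, pow_succ]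
    ring
  linear_combination main


lemma LL_main (x s : R) : ∀ n, LL x s n = x ^ n := by
  intro n
  induction n with
  | zero => simp [LL, cR, fibP_one]
  | succ n ih =>
    match n, ih with
    | 0, _ =>
      show LL x s 1 = x ^ 1
      rw [show LL x s 1 = (-s) ^ 0 * cR R 1 0 * fibP x s 2 from by
        unfold LL; rw [show 1 / 2 + 1 = 1 from rfl, Finset.sum_range_one]]
      rw [fibP_two]
      simp [cR]
    | (n + 1), ih =>
      rcases Nat.even_or_odd n with ⟨m, hm⟩ | ⟨m, hm⟩
      · rw [show n + 1 + 1 = 2 * m + 2 by omega, key_even,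
            show 2 * m + 1 = n + 1 by omega, ih,
            show 2 * m + 2 = (n + 1) + 1 by omega, pow_succ]
        ring
      · rw [show n + 1 + 1 = 2 * m + 3 by omega, key_odd,
            show 2 * m + 2 = n + 1 by omega, ih,
            show 2 * m + 3 = (n + 1) + 1 by omega, pow_succ]
        ring

end Aux

theorem fib_inversion {R : Type*} [CommRing R] (x s : R) (n : ℕ) :
    ∑ k ∈ Finset.range (n / 2 + 1),
      (-s) ^ k * ((n.choose k : R) - if k = 0 then 0 else (n.choose (k - 1) : R)) *
        fibP x s (n - 2 * k + 1) = x ^ n :=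
  LL_main x s n
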